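/- Let G be a P_5-free graph containing an induced 5-cycle v_1v_2v_3v_4v_5, let Z be the set of vertices with no neighbour on the cycle, and let C_i, T_i be the sets of outside vertices whose cycle-neighbourhood is exactly {v_{i−1},v_{i+1}} and {v_{i−1},v_i,v_{i+1}} respectively. Then Z is anticomplete to ⋃_i (C_i ∪ T_i): no vertex of Z has a neighbour in any C_i or T_i. -/

import Mathlib

open SimpleGraph

/-- A graph is `k`-vertex-critical if its chromatic number is `k` and deleting
any vertex decreases the chromatic number below `k`. -/
def IsKVertexCritical {V : Type} (G : SimpleGraph V) (k : ℕ) : Prop :=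
  G.chromaticNumber = k ∧ ∀ v : V, (G.induce {v}ᶜ).chromaticNumber < k

/-- `G` contains an induced subgraph isomorphic to `H`. -/
def HasInducedCopy {V W : Type} (G : SimpleGraph V) (H : SimpleGraph W) : Prop :=
  ∃ s : Set V, Nonempty (H ≃g G.induce s)

/-- The path on 5 vertices. -/
def P5 : SimpleGraph (Fin 5) := SimpleGraph.pathGraph 5

/-- The disjoint union of a path on 3 vertices (0-1-2) and an edge (3-4). -/
def P3P2 : SimpleGraph (Fin 5) :=
  SimpleGraph.fromRel (fun a b => (a = 0 ∧ b = 1) ∨ (a = 1 ∧ b = 2) ∨ (a = 3 ∧ b = 4))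

/-- The complement of `P3 + P2`. -/
def coP3P2 : SimpleGraph (Fin 5) := P3P2ᶜ

/-- The 3-vertex graph with exactly one edge (the disjoint union `P2 + P1`). -/
def P2P1 : SimpleGraph (Fin 3) := SimpleGraph.fromRel (fun a b => a = 0 ∧ b = 1)

/-!
A neighbour `c` of `z` in `C_i` or `T_i` is adjacent to `v_{i+1}` but not to `v_{i+2}` or `v_{i+3}`,
so `z - c - v_{i+1} - v_{i+2} - v_{i+3}` is an induced `P_5`.
-/

lemma hasInducedCopy_of_adj_iff {V W : Type} {G : SimpleGraph V} {H : SimpleGraph W} {f : W → V}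
    (hf : Function.Injective f) (hadj : ∀ a b, G.Adj (f a) (f b) ↔ H.Adj a b) :
    HasInducedCopy G H :=
  ⟨Set.range f, ⟨{ toEquiv := Equiv.ofInjective f hf, map_rel_iff' := by simp [hadj] }⟩⟩

lemma injective_of_adj_iff {V W : Type} {G : SimpleGraph V} {H : SimpleGraph W} {f : W → V}
    (hH : ∀ a b, a ≠ b → ∃ x, ¬ (H.Adj a x ↔ H.Adj b x))
    (hadj : ∀ a b, G.Adj (f a) (f b) ↔ H.Adj a b) : Function.Injective f := by
  intro a b hab
  by_contra hne
  obtain ⟨x, hx⟩ := hH a b hne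
  exact hx (by rw [← hadj, ← hadj, hab])

lemma hasInducedCopy_P5_of_path {V : Type} {G : SimpleGraph V} {a b c d e : V}
    (hab : G.Adj a b) (hbc : G.Adj b c) (hcd : G.Adj c d) (hde : G.Adj d e)
    (hac : ¬ G.Adj a c) (had : ¬ G.Adj a d) (hae : ¬ G.Adj a e)
    (hbd : ¬ G.Adj b d) (hbe : ¬ G.Adj b e) (hce : ¬ G.Adj c e) :
    HasInducedCopy G P5 := by
  have hadj : ∀ i j, G.Adj (![a, b, c, d, e] i) (![a, b, c, d, e] j) ↔ P5.Adj i j := by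
    intro i j
    fin_cases i <;> fin_cases j <;>
      simp [P5, pathGraph_adj, G.adj_comm, *]
  -- `P_5` has no twins, so the five vertices are automatically distinct.
  have htwin : ∀ i j : Fin 5, i ≠ j → ∃ x, ¬ (P5.Adj i x ↔ P5.Adj j x) := by
    simp only [P5, pathGraph_adj]
    decide
  exact hasInducedCopy_of_adj_iff (injective_of_adj_iff htwin hadj) hadj

lemma not_adj_of_adj_cycle_succ {V : Type} {G : SimpleGraph V} (hP5 : ¬ HasInducedCopy G P5)
    {v : Fin 5 → V} (hC5 : ∀ i j : Fin 5, G.Adj (v i) (v j) ↔ (j = i + 1 ∨ i = j + 1))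
    {z c : V} (hz : ∀ j, ¬ G.Adj z (v j)) {i : Fin 5}
    (h₁ : G.Adj c (v (i + 1))) (h₂ : ¬ G.Adj c (v (i + 2))) (h₃ : ¬ G.Adj c (v (i + 3))) :
    ¬ G.Adj z c := by
  have h₁₂ : G.Adj (v (i + 1)) (v (i + 2)) := (hC5 _ _).2 (by simp [add_assoc])
  have h₂₃ : G.Adj (v (i + 2)) (v (i + 3)) := (hC5 _ _).2 (by simp [add_assoc])
  have h₁₃ : ¬ G.Adj (v (i + 1)) (v (i + 3)) := (hC5 _ _).not.2 (by simp [add_assoc])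
  exact fun hzc ↦ hP5 (hasInducedCopy_P5_of_path hzc h₁ h₁₂ h₂₃ (hz _) (hz _) (hz _) h₂ h₃ h₁₃)

theorem stmt_12_general {V : Type} (G : SimpleGraph V)
    (hP5 : ¬ HasInducedCopy G P5)
    (v : Fin 5 → V)
    (hC5 : ∀ i j : Fin 5, G.Adj (v i) (v j) ↔ (j = i + 1 ∨ i = j + 1)) :
    ∀ z ∈ {u : V | (∀ j, u ≠ v j) ∧ ∀ j : Fin 5, ¬ G.Adj u (v j)},
      ∀ i : Fin 5,
        (∀ c ∈ {u : V | (∀ j, u ≠ v j) ∧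
            ∀ j : Fin 5, G.Adj u (v j) ↔ (j = i - 1 ∨ j = i + 1)}, ¬ G.Adj z c) ∧
        (∀ t ∈ {u : V | (∀ j, u ≠ v j) ∧
            ∀ j : Fin 5, G.Adj u (v j) ↔ (j = i - 1 ∨ j = i ∨ j = i + 1)}, ¬ G.Adj z t) := by
  rintro z ⟨_, hz⟩ i
  refine ⟨fun c ⟨_, hc⟩ ↦ ?_, fun t ⟨_, ht⟩ ↦ ?_⟩
  · exact not_adj_of_adj_cycle_succ hP5 hC5 hz (i := i) ((hc _).2 (by simp))
      ((hc _).not.2 (by simp [sub_eq_add_neg]; decide))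
      ((hc _).not.2 (by simp [sub_eq_add_neg]; decide))
  · exact not_adj_of_adj_cycle_succ hP5 hC5 hz (i := i) ((ht _).2 (by simp))
      ((ht _).not.2 (by simp [sub_eq_add_neg]; decide))
      ((ht _).not.2 (by simp [sub_eq_add_neg]; decide))

/-- In a `P5`-free graph with an induced 5-cycle, the set `Z` of vertices with no
neighbour on the cycle is anticomplete to every `C_i` and `T_i`. -/
theorem stmt_12 {V : Type} [Fintype V] (G : SimpleGraph V)
    (hP5 : ¬ HasInducedCopy G P5)
    (v : Fin 5 → V) (hv : Function.Injective v)
    (hC5 : ∀ i j : Fin 5, G.Adj (v i) (v j) ↔ (j = i + 1 ∨ i = j + 1)) :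
    ∀ z ∈ {u : V | (∀ j, u ≠ v j) ∧ ∀ j : Fin 5, ¬ G.Adj u (v j)},
      ∀ i : Fin 5,
        (∀ c ∈ {u : V | (∀ j, u ≠ v j) ∧
            ∀ j : Fin 5, G.Adj u (v j) ↔ (j = i - 1 ∨ j = i + 1)}, ¬ G.Adj z c) ∧
        (∀ t ∈ {u : V | (∀ j, u ≠ v j) ∧
            ∀ j : Fin 5, G.Adj u (v j) ↔ (j = i - 1 ∨ j = i ∨ j = i + 1)}, ¬ G.Adj z t) :=
  stmt_12_general G hP5 v hC5
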